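/- arXiv:1806.10544 — 2 statements merged into one kernel-verified Lean document; each statement's English description precedes it below -/
import Mathlib

section
/- Let K be a field, m ≥ 1, k ≥ 1, G_0 ∈ K^{m×m}, Ĝ_0 ∈ K^{km×km}, let φ ∈ K^k be a vector whose last coordinate equals 1, and let v ∈ K^k with v ≠ 0, such that Ĝ_0·(φ⊗I_m) = v ⊗ G_0. Then: (1) for every u ∈ K^m, G_0 u = 0 if and only if Ĝ_0·(φ⊗u) = 0; moreover u ≠ 0 if and only if φ⊗u ≠ 0. (2) If in addition dim ker Ĝ_0 = dim ker G_0, then a family u_1, …, u_t is a basis of ker G_0 = {u : G_0u = 0} if and only if φ⊗u_1, …, φ⊗u_t is a basis of ker Ĝ_0 = {x : Ĝ_0x = 0}. -/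
/-!
Multiplying the relation by `u` gives `Ĝ₀ (φ ⊗ u) = v ⊗ (G₀ u)`, and `w ↦ c ⊗ w` is injective
whenever `c ≠ 0`; this is the kernel correspondence. The injective map `u ↦ φ ⊗ u` therefore
embeds `ker G₀` into `ker Ĝ₀`, onto it when the dimensions agree, and an injective linear map
carries bases of a subspace exactly to bases of its image.
-/

open Matrix

section Kronecker

variable {R : Type*} {ι κ : Type*}

def kronVec [CommSemiring R] (φ : ι → R) : (κ → R) →ₗ[R] (ι × κ → R) where
  toFun u p := φ p.1 * u p.2
  map_add' _ _ := funext fun _ => mul_add _ _ _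
  map_smul' _ _ := funext fun _ => mul_left_comm _ _ _

@[simp]
theorem kronVec_apply [CommSemiring R] (φ : ι → R) (u : κ → R) (p : ι × κ) :
    kronVec φ u p = φ p.1 * u p.2 :=
  rfl

theorem kronVec_injective [CommSemiring R] [IsLeftCancelMulZero R] {φ : ι → R} (hφ : φ ≠ 0) :
    Function.Injective (kronVec (κ := κ) φ) := by
  obtain ⟨i, hi⟩ := Function.ne_iff.mp hφ
  intro u w huw
  funext j
  exact mul_left_cancel₀ hi (congrFun huw (i, j))

/-- `φ ⊗ I` applied to `u` is `φ ⊗ u`. -/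
theorem mulVec_kronIdentity [CommSemiring R] [Fintype κ] [DecidableEq κ] (φ : ι → R)
    (u : κ → R) :
    (of fun (p : ι × κ) (j : κ) => if p.2 = j then φ p.1 else 0) *ᵥ u = kronVec φ u := by
  funext p
  simp [mulVec, dotProduct, ite_mul]

section KernelCorrespondence

variable [Fintype ι] [Fintype κ] [DecidableEq κ]

theorem mulVec_kronVec_of_mul_kronIdentity [CommSemiring R] {G : Matrix κ κ R}
    {Ghat : Matrix (ι × κ) (ι × κ) R} {φ v : ι → R}
    (hrel : Ghat * (of fun (p : ι × κ) (j : κ) => if p.2 = j then φ p.1 else 0)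
      = (of fun (p : ι × κ) (j : κ) => if p.2 = j then v p.1 else 0) * G) (u : κ → R) :
    Ghat *ᵥ kronVec φ u = kronVec v (G *ᵥ u) := by
  rw [← mulVec_kronIdentity, mulVec_mulVec, hrel, ← mulVec_mulVec, mulVec_kronIdentity]

theorem mulVec_kronVec_eq_zero_iff [CommSemiring R] [IsLeftCancelMulZero R] {G : Matrix κ κ R}
    {Ghat : Matrix (ι × κ) (ι × κ) R} {φ v : ι → R} (hv : v ≠ 0)
    (hrel : Ghat * (of fun (p : ι × κ) (j : κ) => if p.2 = j then φ p.1 else 0)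
      = (of fun (p : ι × κ) (j : κ) => if p.2 = j then v p.1 else 0) * G) (u : κ → R) :
    Ghat *ᵥ kronVec φ u = 0 ↔ G *ᵥ u = 0 := by
  rw [mulVec_kronVec_of_mul_kronIdentity hrel, (kronVec_injective hv).eq_iff' (map_zero _)]

theorem map_kronVec_ker_eq [Field R] {G : Matrix κ κ R}
    {Ghat : Matrix (ι × κ) (ι × κ) R} {φ v : ι → R} (hφ : φ ≠ 0) (hv : v ≠ 0)
    (hrel : Ghat * (of fun (p : ι × κ) (j : κ) => if p.2 = j then φ p.1 else 0)
      = (of fun (p : ι × κ) (j : κ) => if p.2 = j then v p.1 else 0) * G)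
    (hdim : Module.finrank R (LinearMap.ker Ghat.mulVecLin)
      = Module.finrank R (LinearMap.ker G.mulVecLin)) :
    (LinearMap.ker G.mulVecLin).map (kronVec φ) = LinearMap.ker Ghat.mulVecLin := by
  refine Submodule.eq_of_le_of_finrank_le ?_ ?_
  · rintro _ ⟨u, hu, rfl⟩
    exact (mulVec_kronVec_eq_zero_iff hv hrel u).mpr hu
  · rw [hdim, (Submodule.equivMapOfInjective _ (kronVec_injective hφ) _).finrank_eq]

end KernelCorrespondence

theorem LinearMap.linearIndependent_and_span_eq_map_iff {M N : Type*} [Semiring R]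
    [AddCommMonoid M] [AddCommMonoid N] [Module R M] [Module R N] {f : M →ₗ[R] N}
    (hf : Function.Injective f) (S : Submodule R M) (u : ι → M) :
    (LinearIndependent R (f ∘ u) ∧ Submodule.span R (Set.range (f ∘ u)) = S.map f) ↔
      (LinearIndependent R u ∧ Submodule.span R (Set.range u) = S) := by
  rw [f.linearIndependent_iff_of_injOn hf.injOn, Set.range_comp, ← Submodule.map_span,
    (Submodule.map_injective_of_injective hf).eq_iff]

end Kronecker

/-- Evaluated form of the relation `Ĝ(λ)(Φ_k(λ)⊗I_m) = v ⊗ G(λ)` at a finite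
eigenvalue: if `Ĝ₀ (φ ⊗ I_m) = v ⊗ G₀` with `φ` having last coordinate `1` and `v ≠ 0`, then
`G₀ u = 0 ↔ Ĝ₀ (φ ⊗ u) = 0` (and `u ≠ 0 ↔ φ ⊗ u ≠ 0`); moreover, if the kernels of `Ĝ₀` and
`G₀` have equal dimension, bases of `ker G₀` correspond to bases of `ker Ĝ₀` under `u ↦ φ ⊗ u`. -/
theorem kernel_correspondence_kronecker
    {K : Type*} [Field K] {m k : ℕ} (hk : 1 ≤ k)
    (G₀ : Matrix (Fin m) (Fin m) K)
    (Ghat₀ : Matrix (Fin k × Fin m) (Fin k × Fin m) K)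
    (φ : Fin k → K) (hφlast : φ ⟨k - 1, by omega⟩ = 1)
    (v : Fin k → K) (hv : v ≠ 0)
    (hrel : Ghat₀ *
        (Matrix.of fun (p : Fin k × Fin m) (j : Fin m) => if p.2 = j then φ p.1 else 0)
      = (Matrix.of fun (p : Fin k × Fin m) (j : Fin m) => if p.2 = j then v p.1 else 0) * G₀) :
    (∀ u : Fin m → K,
      (G₀ *ᵥ u = 0 ↔ Ghat₀ *ᵥ (fun p : Fin k × Fin m => φ p.1 * u p.2) = 0) ∧
      (u ≠ 0 ↔ (fun p : Fin k × Fin m => φ p.1 * u p.2) ≠ 0)) ∧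
    (Module.finrank K (LinearMap.ker Ghat₀.mulVecLin)
        = Module.finrank K (LinearMap.ker G₀.mulVecLin) →
      ∀ (t : ℕ) (u : Fin t → (Fin m → K)),
        (LinearIndependent K u ∧
            Submodule.span K (Set.range u) = LinearMap.ker G₀.mulVecLin) ↔
        (LinearIndependent K (fun i (p : Fin k × Fin m) => φ p.1 * u i p.2) ∧
            Submodule.span K (Set.range (fun i (p : Fin k × Fin m) => φ p.1 * u i p.2))
              = LinearMap.ker Ghat₀.mulVecLin)) := by
  have hφ : φ ≠ 0 := fun h => one_ne_zero (hφlast ▸ congrFun h _)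
  refine ⟨fun u => ⟨(mulVec_kronVec_eq_zero_iff hv hrel u).symm,
    ((kronVec_injective hφ).ne_iff' (map_zero _)).symm⟩, fun hdim t u => ?_⟩
  rw [← map_kronVec_ker_eq hφ hv hrel hdim]
  exact (LinearMap.linearIndependent_and_span_eq_map_iff (kronVec_injective hφ) _ u).symm
end

section
/- Let F be a field, k ≥ 2, and let P(λ) = Σ_{i=0}^{k} P_i φ_i(λ) with P_i ∈ F^{m×m} symmetric (P_i^T = P_i for all i) and P_k ≠ 0. Let L(λ) = λX + Y ∈ F[λ]^{km×km} be a pencil satisfying L(λ)·(Φ_k(λ)⊗I_m) = v ⊗ P(λ) for some v ∈ F^k. Then L(λ) is block-symmetric if and only if L(λ) is symmetric (X^T = X and Y^T = Y). In other words, DM(P) = S(P) := {L ∈ M_1(P) : L(λ) = L(λ)^T}. -/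
/-!
Write `D^{rs}` (`swapDiff L r s`) for the pencil with entries
`L_{(i,r),(j,s)} - L_{(i,s),(j,r)}`. As every `P_i` is symmetric, the right-hand side of the
ansatz equation is symmetric in `(r, s)`, so `D^{rs}(λ) Φ_k(λ) = 0`. If `L` is block-symmetric
then `D^{rs}` is symmetric, and if `L` is symmetric then `D^{rs}` is skew-symmetric. In both
cases `D^{rs} = 0`, which together with the assumed symmetry gives the other one.

A pencil `D(λ) = λA + B` with `Dᵀ = ±D` and `D(λ) Φ_k(λ) = 0` vanishes: in two variables,
`Φ(μ)ᵀ D(λ) Φ(λ) = 0` and, by the (skew-)symmetry, `Φ(μ)ᵀ D(μ) Φ(λ) = ±Φ(λ)ᵀ D(μ) Φ(μ) = 0`.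
Subtracting gives `(λ - μ) Φ(μ)ᵀ A Φ(λ) = 0`, so `A = 0` because the `φ_j`, of degree `j` by the
recurrence, are linearly independent; then `B Φ(λ) = 0` forces `B = 0`.
-/

open Matrix

/-- The column vector `Φ_k(λ) ⊗ I_m` as a `km × m` polynomial matrix. -/
noncomputable def phiKron {F : Type*} [Field F] (φ : ℕ → Polynomial F) (k m : ℕ) :
    Matrix (Fin k × Fin m) (Fin m) (Polynomial F) :=
  Matrix.of fun p j => if p.2 = j then φ (k - 1 - (p.1 : ℕ)) else 0

/-- The matrix `v ⊗ I_m ∈ R^{km×m}` built from a vector `v ∈ R^k`. -/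
def vKron {R : Type*} [Semiring R] (k m : ℕ) (v : Fin k → R) :
    Matrix (Fin k × Fin m) (Fin m) R :=
  Matrix.of fun p j => if p.2 = j then v p.1 else 0

open Polynomial Function

theorem degree_eq_of_threeTermRecurrence {F : Type*} [Field F] {α β γ : ℕ → F}
    (hα : ∀ j, α j ≠ 0) {φ : ℕ → F[X]} (hφ0 : φ 0 = 1)
    (hrec : ∀ j, C (α j) * φ (j + 1) = (X - C (β j)) * φ j
      - C (γ j) * (if j = 0 then 0 else φ (j - 1))) (j : ℕ) :
    (φ j).degree = j := by
  induction j using Nat.strong_induction_on with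
  | _ j ih =>
    rcases j with _ | j
    · simp [hφ0]
    have hlow :
        (C (γ j) * (if j = 0 then 0 else φ (j - 1))).degree < ((j + 1 : ℕ) : WithBot ℕ) := by
      refine (degree_mul_le _ _).trans_lt ?_
      split_ifs
      · simp
      · rw [ih (j - 1) (by omega)]
        refine (add_le_add_left degree_C_le _).trans_lt ?_
        norm_cast
        omega
    have hmain : ((X - C (β j)) * φ j).degree = ((j + 1 : ℕ) : WithBot ℕ) := by
      rw [degree_mul, degree_X_sub_C, ih j (by omega)]
      norm_cast
      omega
    rw [← degree_C_mul (hα j), hrec, degree_sub_eq_left_of_degree_lt (hmain ▸ hlow), hmain]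

theorem linearIndependent_comp_of_degree_eq {R ι : Type*} [CommRing R] [IsDomain R]
    {φ : ℕ → R[X]} (hφ : ∀ t, (φ t).degree = t) {e : ι → ℕ} (he : Injective e) :
    LinearIndependent R (φ ∘ e) :=
  (Sequence.linearIndependent ⟨φ, hφ⟩).comp e he

theorem eq_zero_of_C_comp_dotProduct_eq_zero {R ι : Type*} [CommRing R] [Fintype ι]
    {Φ : ι → R[X]} (hΦ : LinearIndependent R Φ) {c : ι → R} (h : (C ∘ c) ⬝ᵥ Φ = 0) : c = 0 := by
  funext j
  refine Fintype.linearIndependent_iff.1 hΦ c ?_ j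
  simpa only [dotProduct, Function.comp_apply, smul_eq_C_mul] using h

theorem eq_zero_of_map_C_mulVec_eq_zero {R ι κ : Type*} [CommRing R] [Fintype ι]
    {Φ : ι → R[X]} (hΦ : LinearIndependent R Φ) {B : Matrix κ ι R} (h : B.map C *ᵥ Φ = 0) :
    B = 0 :=
  funext fun i => eq_zero_of_C_comp_dotProduct_eq_zero hΦ (congrFun h i)

theorem eq_zero_of_C_comp_dotProduct_mulVec_map_eq_zero {R ι κ : Type*} [CommRing R]
    [Fintype ι] [Fintype κ] {Φ : ι → R[X]} {Ψ : κ → R[X]} (hΦ : LinearIndependent R Φ)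
    (hΨ : LinearIndependent R[X] (Polynomial.map C ∘ Ψ)) {A : Matrix ι κ R}
    (h : (C ∘ Φ) ⬝ᵥ (A.map (fun a => C (C a)) *ᵥ Polynomial.map C ∘ Ψ) = 0) : A = 0 := by
  have hvec : (C ∘ Φ) ᵥ* A.map (fun a => C (C a)) = C ∘ (Φ ᵥ* A.map C) := by
    funext j
    rw [Function.comp_apply, RingHom.map_vecMul, Matrix.map_map]
    rfl
  rw [dotProduct_mulVec, hvec] at h
  have hΦA := eq_zero_of_C_comp_dotProduct_eq_zero hΨ h
  rw [← mulVec_transpose, ← transpose_map] at hΦA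
  simpa using eq_zero_of_map_C_mulVec_eq_zero hΦ hΦA

theorem map_C_sub_C_eq_of_natDegree_le_one {R : Type*} [CommRing R] {p : R[X]}
    (hp : p.natDegree ≤ 1) : p.map C - C p = (X - C X) * C (C (p.coeff 1)) := by
  conv_lhs => rw [eq_X_add_C_of_natDegree_le_one hp]
  simp only [Polynomial.map_add, Polynomial.map_mul, map_X, Polynomial.map_C, map_add, map_mul]
  ring

theorem pencil_eq_zero_of_mulVec_eq_zero {R ι : Type*} [CommRing R] [Fintype ι]
    {Φ : ι → R[X]} (hΦ : LinearIndependent R Φ)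
    (hΦX : LinearIndependent R[X] (Polynomial.map C ∘ Φ))
    {D : Matrix ι ι R[X]} (hdeg : ∀ i j, (D i j).natDegree ≤ 1) (hsymm : Dᵀ = D ∨ Dᵀ = -D)
    (hD : D *ᵥ Φ = 0) : D = 0 := by
  -- In `R[X][X]`, `Φ` evaluated at `λ = X` and at `μ = C X`.
  set ΦX : ι → R[X][X] := Polynomial.map C ∘ Φ
  set ΦC : ι → R[X][X] := C ∘ Φ
  have hX : D.map (mapRingHom C) *ᵥ ΦX = 0 := funext fun i => by
    simpa [hD] using (RingHom.map_mulVec (mapRingHom C) D Φ i).symm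
  have hC : D.map C *ᵥ ΦC = 0 := funext fun i => by
    simpa [hD] using (RingHom.map_mulVec C D Φ i).symm
  have hCX : ΦC ⬝ᵥ (D.map C *ᵥ ΦX) = 0 := by
    have h : ΦC ⬝ᵥ ((D.map C)ᵀ *ᵥ ΦX) = 0 := by
      rw [mulVec_transpose, dotProduct_comm, ← dotProduct_mulVec, hC, dotProduct_zero]
    rcases hsymm with hsymm | hsymm
    · rwa [← transpose_map, hsymm] at h
    · rwa [← transpose_map, hsymm, Matrix.map_neg _ (map_neg C), neg_mulVec, dotProduct_neg,
        neg_eq_zero] at h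
  set A : Matrix ι ι R := D.map (coeff · 1)
  have hdiff :
      D.map (mapRingHom C) - D.map C = (X - C X : R[X][X]) • A.map (fun a => C (C a)) := by
    refine Matrix.ext fun i j => ?_
    simpa [A] using map_C_sub_C_eq_of_natDegree_le_one (hdeg i j)
  have hA : A = 0 := by
    refine eq_zero_of_C_comp_dotProduct_mulVec_map_eq_zero hΦ hΦX ?_
    refine (monic_X_sub_C (X : R[X])).mul_right_eq_zero_iff.1 ?_
    rw [← smul_eq_mul, ← dotProduct_smul, ← smul_mulVec, ← hdiff, sub_mulVec, dotProduct_sub,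
      hX, hCX, dotProduct_zero, sub_zero]
  have hconst : D = (D.map (coeff · 0)).map C := by
    refine Matrix.ext fun i j => ?_
    have h1 : (D i j).coeff 1 = 0 := congrFun (congrFun hA i) j
    simpa [h1] using eq_X_add_C_of_natDegree_le_one (hdeg i j)
  rw [hconst] at hD ⊢
  rw [eq_zero_of_map_C_mulVec_eq_zero hΦ hD]
  simp

theorem X_mul_C_add_C_inj {R : Type*} [Semiring R] {a b a' b' : R} :
    X * C a + C b = X * C a' + C b' ↔ a = a' ∧ b = b' := by
  refine ⟨fun h => ⟨?_, ?_⟩, by rintro ⟨rfl, rfl⟩; rfl⟩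
  · simpa using congrArg (coeff · 1) h
  · simpa using congrArg (coeff · 0) h

theorem pencil_transpose_eq_self_iff {R n : Type*} [Semiring R] (A B : Matrix n n R) :
    (of fun p q => X * C (A p q) + C (B p q))ᵀ = of (fun p q => X * C (A p q) + C (B p q)) ↔
      Aᵀ = A ∧ Bᵀ = B := by
  simp only [← Matrix.ext_iff, transpose_apply, of_apply, X_mul_C_add_C_inj, forall_and]

theorem natDegree_pencil_sub_le {R : Type*} [Ring R] (a b a' b' : R) :
    (X * C a + C b - (X * C a' + C b')).natDegree ≤ 1 := by
  compute_degree

theorem mul_phiKron_apply {F n : Type*} [Field F] {φ : ℕ → F[X]} {k m : ℕ}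
    (M : Matrix n (Fin k × Fin m) F[X]) (p : n) (s : Fin m) :
    (M * phiKron φ k m) p s = ∑ j : Fin k, M p (j, s) * φ (k - 1 - (j : ℕ)) := by
  simp [Matrix.mul_apply, phiKron, Fintype.sum_prod_type]

theorem vKron_mul_apply {R n : Type*} [Semiring R] {k m : ℕ} (w : Fin k → R)
    (N : Matrix (Fin m) n R) (i : Fin k) (r : Fin m) (s : n) :
    (vKron k m w * N) (i, r) s = w i * N r s := by
  simp [Matrix.mul_apply, vKron]

def swapDiff {R ι κ : Type*} [Sub R] (M : Matrix (ι × κ) (ι × κ) R) (r s : κ) : Matrix ι ι R :=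
  of fun i j => M (i, r) (j, s) - M (i, s) (j, r)

theorem swapDiff_mulVec_eq_zero {F : Type*} [Field F] {φ : ℕ → F[X]} {k m : ℕ}
    {M : Matrix (Fin k × Fin m) (Fin k × Fin m) F[X]} {w : Fin k → F[X]}
    {N : Matrix (Fin m) (Fin m) F[X]} (hN : Nᵀ = N) (h : M * phiKron φ k m = vKron k m w * N)
    (r s : Fin m) : swapDiff M r s *ᵥ (fun j : Fin k => φ (k - 1 - (j : ℕ))) = 0 := by
  funext i
  have hrs := congrFun (congrFun h (i, r)) s
  have hsr := congrFun (congrFun h (i, s)) r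
  rw [mul_phiKron_apply, vKron_mul_apply] at hrs hsr
  rw [← hN, transpose_apply] at hrs
  simp [swapDiff, mulVec, dotProduct, sub_mul, Finset.sum_sub_distrib, hrs, hsr]

theorem blockSymm_iff_transpose_eq_self {R ι κ : Type*} [Ring R]
    {M : Matrix (ι × κ) (ι × κ) R}
    (h : ∀ r s, (swapDiff M r s)ᵀ = swapDiff M r s ∨ (swapDiff M r s)ᵀ = -swapDiff M r s →
      swapDiff M r s = 0) :
    (∀ i j r s, M (i, r) (j, s) = M (j, r) (i, s)) ↔ Mᵀ = M := by
  have hswap : ∀ r s, swapDiff M r s = 0 → ∀ i j, M (i, r) (j, s) = M (i, s) (j, r) :=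
    fun r s h0 i j => sub_eq_zero.1 (congrFun (congrFun h0 i) j)
  constructor
  · intro hblock
    have hsymm : ∀ r s, (swapDiff M r s)ᵀ = swapDiff M r s := fun r s =>
      Matrix.ext fun i j => by simp [swapDiff, hblock j i]
    ext ⟨i, r⟩ ⟨j, s⟩
    rw [transpose_apply, hblock, hswap s r (h s r (.inl (hsymm s r))), hblock]
  · intro hM
    have hM' : ∀ p q, M p q = M q p := fun p q => congrFun (congrFun hM q) p
    have hskew : ∀ r s, (swapDiff M r s)ᵀ = -swapDiff M r s := fun r s =>
      Matrix.ext fun i j => by simp [swapDiff, hM' (j, r), hM' (j, s)]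
    intro i j r s
    rw [hswap r s (h r s (.inr (hskew r s))), hM']

theorem DM_eq_symmetric_pencils_general
    {F : Type*} [Field F] {m k : ℕ}
    (α β γ : ℕ → F) (hα : ∀ j, α j ≠ 0)
    (φ : ℕ → Polynomial F) (hφ0 : φ 0 = 1)
    (hrec : ∀ j : ℕ, Polynomial.C (α j) * φ (j + 1)
      = (Polynomial.X - Polynomial.C (β j)) * φ j
        - Polynomial.C (γ j) * (if j = 0 then 0 else φ (j - 1)))
    (P : ℕ → Matrix (Fin m) (Fin m) F) (hPsym : ∀ i, (P i)ᵀ = P i)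
    (X Y : Matrix (Fin k × Fin m) (Fin k × Fin m) F)
    (L : Matrix (Fin k × Fin m) (Fin k × Fin m) (Polynomial F))
    (hL : L = Matrix.of fun p q => Polynomial.X * Polynomial.C (X p q) + Polynomial.C (Y p q))
    (v : Fin k → F)
    (hansatz : L * phiKron φ k m
      = vKron k m (fun i => Polynomial.C (v i)) *
          (∑ i ∈ Finset.range (k + 1), (P i).map (fun a => φ i * Polynomial.C a))) :
    (∀ (i j : Fin k) (r s : Fin m), L (i, r) (j, s) = L (j, r) (i, s)) ↔
      (Xᵀ = X ∧ Yᵀ = Y) := by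
  have hφ := degree_eq_of_threeTermRecurrence hα hφ0 hrec
  have hrev : Injective fun j : Fin k => k - 1 - (j : ℕ) := fun i j hij => by
    have := i.isLt; have := j.isLt; simp only at hij; omega
  have hΦ := linearIndependent_comp_of_degree_eq hφ hrev
  have hΦC := linearIndependent_comp_of_degree_eq (R := F[X]) (φ := Polynomial.map C ∘ φ)
    (fun t => by simp [degree_map_eq_of_injective C_injective, hφ]) hrev
  have hsymmRHS : (∑ i ∈ Finset.range (k + 1), (P i).map (fun a => φ i * C a))ᵀ
      = ∑ i ∈ Finset.range (k + 1), (P i).map (fun a => φ i * C a) := by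
    simp only [transpose_sum, ← transpose_map, hPsym]
  have hdeg : ∀ r s i j, (swapDiff L r s i j).natDegree ≤ 1 := fun r s i j => by
    simpa [swapDiff, hL] using natDegree_pencil_sub_le _ _ _ _
  rw [blockSymm_iff_transpose_eq_self fun r s hsymm => pencil_eq_zero_of_mulVec_eq_zero hΦ hΦC
    (hdeg r s) hsymm (swapDiff_mulVec_eq_zero hsymmRHS hansatz r s), hL,
    pencil_transpose_eq_self_iff]

/-- For a symmetric polynomial matrix `P(λ) = Σ_{i=0}^{k} P_i φ_i(λ)` of
degree `k ≥ 2`, a pencil `L(λ) = λX + Y ∈ 𝕄₁(P)` (with some ansatz vector `v`) is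
block-symmetric if and only if it is symmetric; i.e. `𝔻𝕄(P) = 𝕊(P)`. -/
theorem DM_eq_symmetric_pencils
    {F : Type*} [Field F] {m k : ℕ} (hk : 2 ≤ k)
    (α β γ : ℕ → F) (hα : ∀ j, α j ≠ 0)
    (φ : ℕ → Polynomial F) (hφ0 : φ 0 = 1)
    (hrec : ∀ j : ℕ, Polynomial.C (α j) * φ (j + 1)
      = (Polynomial.X - Polynomial.C (β j)) * φ j
        - Polynomial.C (γ j) * (if j = 0 then 0 else φ (j - 1)))
    (P : ℕ → Matrix (Fin m) (Fin m) F) (hPsym : ∀ i, (P i)ᵀ = P i) (hPk : P k ≠ 0)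
    (X Y : Matrix (Fin k × Fin m) (Fin k × Fin m) F)
    (L : Matrix (Fin k × Fin m) (Fin k × Fin m) (Polynomial F))
    (hL : L = Matrix.of fun p q => Polynomial.X * Polynomial.C (X p q) + Polynomial.C (Y p q))
    (v : Fin k → F)
    (hansatz : L * phiKron φ k m
      = vKron k m (fun i => Polynomial.C (v i)) *
          (∑ i ∈ Finset.range (k + 1), (P i).map (fun a => φ i * Polynomial.C a))) :
    (∀ (i j : Fin k) (r s : Fin m), L (i, r) (j, s) = L (j, r) (i, s)) ↔
      (Xᵀ = X ∧ Yᵀ = Y) :=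
  DM_eq_symmetric_pencils_general α β γ hα φ hφ0 hrec P hPsym X Y L hL v hansatz
end
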